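/- Inverted Fano bound (entropy certifies a Bayes-risk lower bound): let π be a probability vector on N ≥ 2 items with r = 1 − max_j π_j, and let r₀ ∈ [0, (N−1)/N]. If H(π) ≥ H_b(r₀) + r₀·log(N−1), then r ≥ r₀. -/

import Mathlib

/-!
Fano's inequality: splitting off the largest mass `1 - r` and applying Jensen's inequality
(concavity of `x ↦ -x log x`) to the remaining `N - 1` masses, which sum to `r`, gives
`H(p) ≤ h_N(r) := H_b(r) + r log (N - 1)`, the `N`-ary entropy. Since `h_N` is strictly increasing
on `[0, 1 - 1/N]`, which contains both `r` and `r₀`, the hypothesis `h_N(r₀) ≤ H(p) ≤ h_N(r)`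
forces `r₀ ≤ r`.
-/

open Real Finset

lemma Real.sum_negMulLog_le {ι : Type*} (s : Finset ι) {x : ι → ℝ} (hx : ∀ i ∈ s, 0 ≤ x i) :
    ∑ i ∈ s, negMulLog (x i) ≤ negMulLog (∑ i ∈ s, x i) + (∑ i ∈ s, x i) * log #s := by
  rcases s.eq_empty_or_nonempty with rfl | hs
  · simp
  have hn : (0 : ℝ) < #s := by exact_mod_cast hs.card_pos
  have hjensen := concaveOn_negMulLog.le_map_sum (t := s) (w := fun _ ↦ (#s : ℝ)⁻¹) (p := x)
    (fun _ _ ↦ by positivity) (by simp [hn.ne']) hx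
  simp only [smul_eq_mul, ← Finset.mul_sum] at hjensen
  rw [mul_comm, negMulLog_mul, negMulLog, log_inv] at hjensen
  field_simp at hjensen
  linarith

lemma Real.qaryEntropy_eq (q : ℕ) (x : ℝ) :
    qaryEntropy q x = -x * log x - (1 - x) * log (1 - x) + x * log ((q : ℝ) - 1) := by
  simp only [qaryEntropy, binEntropy, log_inv]
  push_cast
  ring

theorem Real.sum_negMulLog_le_qaryEntropy {ι : Type*} [Fintype ι] {p : ι → ℝ}
    (hp : ∀ j, 0 ≤ p j) (hsum : ∑ j, p j = 1) (i : ι) :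
    ∑ j, negMulLog (p j) ≤ qaryEntropy (Fintype.card ι) (1 - p i) := by
  classical
  have hrest : ∑ j ∈ univ.erase i, p j = 1 - p i := by
    rw [← hsum, ← add_sum_erase univ p (mem_univ i), add_sub_cancel_left]
  have hcard : ((#(univ.erase i) : ℕ) : ℝ) = (Fintype.card ι : ℝ) - 1 := by
    rw [card_erase_of_mem (mem_univ i), card_univ, Nat.cast_sub (Fintype.card_pos_iff.mpr ⟨i⟩)]
    simp
  have hjensen := sum_negMulLog_le (univ.erase i) (fun j _ ↦ hp j)
  rw [hrest, hcard] at hjensen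
  rw [← add_sum_erase univ _ (mem_univ i), qaryEntropy_eq]
  simp only [negMulLog, sub_sub_cancel] at hjensen ⊢
  linarith

lemma Finset.one_sub_sup'_mem_Icc {ι : Type*} [Fintype ι] {p : ι → ℝ}
    (hp : ∀ j, 0 ≤ p j) (hsum : ∑ j, p j = 1) (h : (univ : Finset ι).Nonempty) :
    1 - univ.sup' h p ∈ Set.Icc (0 : ℝ) (1 - 1 / Fintype.card ι) := by
  obtain ⟨i, -, hi⟩ := exists_mem_eq_sup' h p
  have hle_one : p i ≤ 1 := hsum ▸ single_le_sum (fun j _ ↦ hp j) (mem_univ i)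
  have hsum_le : ∑ j, p j ≤ Fintype.card ι * p i := by
    simpa [← hi] using sum_le_card_nsmul univ p _ fun j _ ↦ le_sup' p (mem_univ j)
  have hcard : (0 : ℝ) < Fintype.card ι := by exact_mod_cast h.card_pos
  refine ⟨by linarith, ?_⟩
  rw [hi, sub_le_sub_iff_left, div_le_iff₀ hcard]
  linarith

/-- **Inverted Fano bound (entropy certifies a Bayes-risk lower bound).** Let `p` be a
probability vector on `N ≥ 2` items with `r = 1 - max_j p_j`, and let
`r₀ ∈ [0, (N-1)/N]`. If the Shannon entropy `H(p) = -∑ j, p j * log (p j)` satisfies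
`H(p) ≥ H_b(r₀) + r₀ * log (N - 1)` (with `H_b` the binary entropy function), then
`r ≥ r₀`. -/
theorem fano_bound_inverted (N : ℕ) (hN : 2 ≤ N) (p : Fin N → ℝ)
    (hnonneg : ∀ j, 0 ≤ p j) (hsum : ∑ j, p j = 1)
    (r : ℝ)
    (hr : r = 1 - Finset.univ.sup' (Finset.univ_nonempty_iff.mpr ⟨⟨0, by omega⟩⟩) p)
    (r₀ : ℝ) (hr₀ : r₀ ∈ Set.Icc (0 : ℝ) (((N : ℝ) - 1) / N))
    (hH : (-∑ j, p j * Real.log (p j)) ≥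
      (-r₀ * Real.log r₀ - (1 - r₀) * Real.log (1 - r₀)) + r₀ * Real.log ((N : ℝ) - 1)) :
    r ≥ r₀ := by
  obtain ⟨i, -, hi⟩ := exists_mem_eq_sup' (univ_nonempty_iff.mpr ⟨⟨0, by omega⟩⟩) p
  have hr_mem : r ∈ Set.Icc (0 : ℝ) (1 - 1 / N) := by
    simpa only [hr, Fintype.card_fin] using one_sub_sup'_mem_Icc hnonneg hsum _
  have hr₀_mem : r₀ ∈ Set.Icc (0 : ℝ) (1 - 1 / N) := by
    rwa [one_sub_div (by positivity)]
  have hfano : -∑ j, p j * log (p j) ≤ qaryEntropy N r := by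
    simpa [hr, hi, negMulLog] using sum_negMulLog_le_qaryEntropy hnonneg hsum i
  rw [← qaryEntropy_eq] at hH
  exact ((qaryEntropy_strictMonoOn hN).le_iff_le hr₀_mem hr_mem).mp (hH.trans hfano)
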